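/- Sphere packing bound for LOBC codes: let γ: M_1 × M_2 → C ⊆ P(F_q^m)^n be a bijective encoder with separation vector (s_1, s_2), and let T_n(d, N, r) denote the minimum cardinality of an r-neighborhood of a code S ⊆ P(F_q^m)^n with |S| = N and minimum subspace distance ≥ d. Then T_n(s_1, |M_1|, ⌊(s_2−1)/2⌋) · |M_2| ≤ |P(F_q^m)|^n. -/

import Mathlib

open Module Finset

/-- Subspace distance `d_S(U,W) = dim(U+W) - dim(U∩W)`. -/
noncomputable def dS {K V : Type*} [Field K] [AddCommGroup V] [Module K V]
    (U W : Submodule K V) : ℕ :=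
  finrank K ↥(U ⊔ W) - finrank K ↥(U ⊓ W)

/-- Extended subspace distance on `n`-tuples of subspaces. -/
noncomputable def dSn {K V : Type*} [Field K] [AddCommGroup V] [Module K V] {n : ℕ}
    (X Y : Fin n → Submodule K V) : ℕ :=
  ∑ i, dS (X i) (Y i)

/-- Ball of radius `r` around a tuple of subspaces. -/
def ballS {K V : Type*} [Field K] [AddCommGroup V] [Module K V] {n : ℕ}
    (r : ℕ) (C : Fin n → Submodule K V) : Set (Fin n → Submodule K V) :=
  {U | dSn U C ≤ r}

/-- `r`-neighborhood of a set of tuples of subspaces. -/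
def nbhdS {K V : Type*} [Field K] [AddCommGroup V] [Module K V] {n : ℕ}
    (r : ℕ) (S : Set (Fin n → Submodule K V)) : Set (Fin n → Submodule K V) :=
  ⋃ C ∈ S, ballS r C

/-- Gaussian binomial coefficient `binom(a,b)_q`, realized as the number of
`b`-dimensional subspaces of `K^a` where `|K| = q`. -/
noncomputable def gaussCard (K : Type*) [Field K] (a b : ℕ) : ℕ :=
  Nat.card {W : Submodule K (Fin a → K) // finrank K ↥W = b}

/-- `T_n(d,N,r)`: the minimum cardinality of an `r`-neighborhood of a code
`S ⊆ P(F_q^m)^n` of size `N` and minimum subspace distance `≥ d`. -/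
noncomputable def Tn (K : Type*) [Field K] (m n d N r : ℕ) : ℕ :=
  sInf {t | ∃ S : Set (Fin n → Submodule K (Fin m → K)), Nat.card ↥S = N ∧
    (∀ X ∈ S, ∀ Y ∈ S, X ≠ Y → d ≤ dSn X Y) ∧ t = Nat.card ↥(nbhdS r S)}

/-! Each message `b` of the second receiver labels the column code `{γ (a, b) | a ∈ M₁}`,
whose minimum distance is at least `s₁`; two codewords in different columns are at distance at
least `s₂ > 2r` with `r = ⌊(s₂ - 1)/2⌋`, so by the triangle inequality for `d_S` the
`r`-neighbourhoods of the columns are pairwise disjoint. Each of these `|M₂|` neighbourhoods has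
at least `T_n(s₁, |M₁|, r)` elements, and all of them lie in `P(F_q^m)^n`. -/

open scoped Function

section SubspaceDistance

variable {K V : Type*} [Field K] [AddCommGroup V] [Module K V]

lemma dS_comm (U W : Submodule K V) : dS U W = dS W U := by
  rw [dS, dS, sup_comm, inf_comm]

lemma dSn_comm {n : ℕ} (X Y : Fin n → Submodule K V) : dSn X Y = dSn Y X := by
  simp only [dSn, dS_comm]

variable [FiniteDimensional K V]

lemma finrank_inf_add_finrank_inf_le (X Y Z : Submodule K V) :
    finrank K ↥(X ⊓ Y) + finrank K ↥(Y ⊓ Z) ≤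
      finrank K ↥Y + finrank K ↥(X ⊓ Z) := by
  have hsup : finrank K ↥(X ⊓ Y ⊔ Y ⊓ Z) ≤ finrank K ↥Y :=
    Submodule.finrank_mono (sup_le inf_le_right inf_le_left)
  have hinf : finrank K ↥(X ⊓ Y ⊓ (Y ⊓ Z)) ≤ finrank K ↥(X ⊓ Z) :=
    Submodule.finrank_mono <|
      le_inf (inf_le_left.trans inf_le_left) (inf_le_right.trans inf_le_right)
  have := Submodule.finrank_sup_add_finrank_inf_eq (X ⊓ Y) (Y ⊓ Z)
  omega

lemma dS_eq_finrank_add_finrank_sub (U W : Submodule K V) :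
    (dS U W : ℤ) = finrank K ↥U + finrank K ↥W - 2 * finrank K ↥(U ⊓ W) := by
  have hle : finrank K ↥(U ⊓ W) ≤ finrank K ↥(U ⊔ W) := Submodule.finrank_mono inf_le_sup
  have := Submodule.finrank_sup_add_finrank_inf_eq U W
  rw [dS]
  omega

lemma dS_triangle (X Y Z : Submodule K V) : dS X Z ≤ dS X Y + dS Y Z := by
  have := finrank_inf_add_finrank_inf_le X Y Z
  have := dS_eq_finrank_add_finrank_sub X Z
  have := dS_eq_finrank_add_finrank_sub X Y
  have := dS_eq_finrank_add_finrank_sub Y Z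
  omega

lemma dSn_triangle {n : ℕ} (X Y Z : Fin n → Submodule K V) :
    dSn X Z ≤ dSn X Y + dSn Y Z := by
  rw [dSn, dSn, dSn, ← Finset.sum_add_distrib]
  exact Finset.sum_le_sum fun i _ => dS_triangle (X i) (Y i) (Z i)

lemma disjoint_nbhdS_of_lt_dSn {n r : ℕ} {S T : Set (Fin n → Submodule K V)}
    (h : ∀ X ∈ S, ∀ Y ∈ T, 2 * r < dSn X Y) : Disjoint (nbhdS r S) (nbhdS r T) := by
  rw [Set.disjoint_left]
  simp only [nbhdS, ballS, Set.mem_iUnion, Set.mem_ofPred_eq]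
  rintro U ⟨X, hX, hUX⟩ ⟨Y, hY, hUY⟩
  refine (h X hX Y hY).not_ge ?_
  calc dSn X Y ≤ dSn X U + dSn U Y := dSn_triangle X U Y
    _ ≤ r + r := add_le_add (dSn_comm X U ▸ hUX) hUY
    _ = 2 * r := (two_mul r).symm

end SubspaceDistance

lemma Tn_le_card_nbhdS {K : Type*} [Field K] {m n d r : ℕ}
    {S : Set (Fin n → Submodule K (Fin m → K))}
    (hS : ∀ X ∈ S, ∀ Y ∈ S, X ≠ Y → d ≤ dSn X Y) :
    Tn K m n d (Nat.card S) r ≤ Nat.card (nbhdS r S) :=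
  Nat.sInf_le ⟨S, rfl, hS, rfl⟩

lemma mul_card_le_card_of_pairwise_disjoint {α ι : Type*} [Finite α] {s : ι → Set α}
    (hs : Pairwise (Disjoint on s)) {t : ℕ} (ht : ∀ i, t ≤ Nat.card (s i)) :
    t * Nat.card ι ≤ Nat.card α := by
  rcases finite_or_infinite ι with hι | hι
  · have := Fintype.ofFinite ι
    calc t * Nat.card ι = ∑ _ : ι, t := by simp [mul_comm]
      _ ≤ ∑ i, (s i).ncard := Finset.sum_le_sum fun i _ => ht i
      _ = (⋃ i, s i).ncard := by
        rw [Set.ncard_iUnion_of_finite (fun i => Set.toFinite _) hs, finsum_eq_sum_of_fintype]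
      _ ≤ Nat.card α := Set.ncard_le_card _
  · simp

theorem stmt9_general (m n : ℕ) (K : Type*) [Field K] [Fintype K]
    (M₁ M₂ : Type*)
    (γ : M₁ × M₂ → (Fin n → Submodule K (Fin m → K))) (hγ : Function.Injective γ)
    (s₁ s₂ : ℕ) (hs : s₁ < s₂)
    (hs₁ : IsLeast {d | ∃ p p' : M₁ × M₂, p.1 ≠ p'.1 ∧ d = dSn (γ p) (γ p')} s₁)
    (hs₂ : IsLeast {d | ∃ p p' : M₁ × M₂, p.2 ≠ p'.2 ∧ d = dSn (γ p) (γ p')} s₂) :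
    Tn K m n s₁ (Nat.card M₁) ((s₂ - 1) / 2) * Nat.card M₂ ≤
      (Nat.card (Submodule K (Fin m → K))) ^ n := by
  set r := (s₂ - 1) / 2
  let column (b : M₂) : Set (Fin n → Submodule K (Fin m → K)) := Set.range fun a => γ (a, b)
  have hcard (b : M₂) : Nat.card (column b) = Nat.card M₁ :=
    Nat.card_range_of_injective fun a a' h => (Prod.ext_iff.mp (hγ h)).1
  have hdist (b : M₂) : ∀ X ∈ column b, ∀ Y ∈ column b, X ≠ Y → s₁ ≤ dSn X Y := by
    rintro _ ⟨a, rfl⟩ _ ⟨a', rfl⟩ hne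
    exact hs₁.2 ⟨(a, b), (a', b), by rintro rfl; exact hne rfl, rfl⟩
  have hdisj : Pairwise (Disjoint on fun b => nbhdS r (column b)) := by
    refine fun b b' hbb' => disjoint_nbhdS_of_lt_dSn ?_
    rintro _ ⟨a, rfl⟩ _ ⟨a', rfl⟩
    show 2 * r < dSn (γ (a, b)) (γ (a', b'))
    have := hs₂.2 ⟨(a, b), (a', b'), hbb', rfl⟩
    omega
  calc Tn K m n s₁ (Nat.card M₁) r * Nat.card M₂
      ≤ Nat.card (Fin n → Submodule K (Fin m → K)) :=
        mul_card_le_card_of_pairwise_disjoint hdisj fun b => hcard b ▸ Tn_le_card_nbhdS (hdist b)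
    _ = Nat.card (Submodule K (Fin m → K)) ^ n := by simp

/-- Sphere packing bound for general broadcast subspace codes:
`T_n(s₁, |M₁|, ⌊(s₂-1)/2⌋) · |M₂| ≤ |P(F_q^m)|^n`. -/
theorem stmt9 (q m n : ℕ) (K : Type*) [Field K] [Fintype K] (hq : Fintype.card K = q)
    (M₁ M₂ : Type*) [Finite M₁] [Finite M₂]
    (hM₁ : 2 ≤ Nat.card M₁) (hM₂ : 2 ≤ Nat.card M₂)
    (γ : M₁ × M₂ → (Fin n → Submodule K (Fin m → K))) (hγ : Function.Injective γ)
    (s₁ s₂ : ℕ) (hs : s₁ < s₂)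
    (hs₁ : IsLeast {d | ∃ p p' : M₁ × M₂, p.1 ≠ p'.1 ∧ d = dSn (γ p) (γ p')} s₁)
    (hs₂ : IsLeast {d | ∃ p p' : M₁ × M₂, p.2 ≠ p'.2 ∧ d = dSn (γ p) (γ p')} s₂) :
    Tn K m n s₁ (Nat.card M₁) ((s₂ - 1) / 2) * Nat.card M₂ ≤
      (Nat.card (Submodule K (Fin m → K))) ^ n :=
  stmt9_general m n K M₁ M₂ γ hγ s₁ s₂ hs hs₁ hs₂
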